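/- Let H be a real inner product space, B : H → H a symmetric everywhere-defined linear operator, g ∈ H with ⟨g, g⟩ > 0. Define E_n = ⟨g, B^{2n} g⟩ (so E_0 = ‖g‖²). Then for all n ≥ 1, (E_{n+1}/E_0)^{1/(n+1)} ≥ (E_n/E_0)^{1/n}. -/

import Mathlib

open RealInnerProductSpace

theorem energy_root_monotone {H : Type*} [NormedAddCommGroup H] [InnerProductSpace ℝ H]
    (B : H →ₗ[ℝ] H) (hB : ∀ x y : H, ⟪B x, y⟫ = ⟪x, B y⟫)
    (g : H) (hg : 0 < ⟪g, g⟫) :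
    ∀ n : ℕ, 1 ≤ n →
      (⟪g, (B ^ (2 * n)) g⟫ / ⟪g, (B ^ (2 * 0)) g⟫) ^ ((1 : ℝ) / n) ≤
        (⟪g, (B ^ (2 * (n + 1))) g⟫ / ⟪g, (B ^ (2 * 0)) g⟫) ^ ((1 : ℝ) / (n + 1)) := by
  have hsym : ∀ (k : ℕ) (x y : H), ⟪(B ^ k) x, y⟫ = ⟪x, (B ^ k) y⟫ := by
    intro k
    induction k with
    | zero => simp
    | succ k ih =>
      intro x y
      conv_lhs => rw [pow_succ, Module.End.mul_apply]
      rw [ih, hB]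
      conv_rhs => rw [pow_succ', Module.End.mul_apply]
  set a : ℕ → ℝ := fun k => ⟪g, (B ^ (2 * k)) g⟫ with ha_def
  have ha : ∀ k, a k = ⟪(B ^ k) g, (B ^ k) g⟫ := by
    intro k
    have h2 : 2 * k = k + k := two_mul k
    simp only [ha_def, h2, pow_add, Module.End.mul_apply, hsym k]
  have hnonneg : ∀ k, 0 ≤ a k := by
    intro k; rw [ha k]; exact real_inner_self_nonneg
  have ha0 : a 0 = ⟪g, g⟫ := by simp [ha_def]
  have hE0 : 0 < a 0 := by rw [ha0]; exact hg
  have hCS : ∀ k, a (k + 1) * a (k + 1) ≤ a k * a (k + 2) := by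
    intro k
    have h1 : ⟪(B ^ k) g, (B ^ (k + 2)) g⟫ = a (k + 1) := by
      rw [hsym, ← Module.End.mul_apply, ← pow_add]
      have : k + (k + 2) = 2 * (k + 1) := by ring
      rw [this]
    have := real_inner_mul_inner_self_le ((B ^ k) g) ((B ^ (k + 2)) g)
    rw [h1, ← ha k, ← ha (k + 2)] at this
    exact this
  intro n hn
  have hn' : (0 : ℝ) < (n : ℝ) := by exact_mod_cast Nat.lt_of_lt_of_le Nat.zero_lt_one hn
  show (a n / a 0) ^ ((1 : ℝ) / n) ≤ (a (n + 1) / a 0) ^ ((1 : ℝ) / (n + 1))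
  by_cases hz : a (n + 1) = 0
  · -- then a n = 0 as well
    obtain ⟨m, rfl⟩ := Nat.exists_eq_succ_of_ne_zero (by omega : n ≠ 0)
    have hz2 : a (m + 2) = 0 := hz
    have h0 : a (m + 1) = 0 := by nlinarith [hCS m, hnonneg (m + 1), hnonneg m]
    rw [h0, hz, zero_div, Real.zero_rpow (by positivity), Real.zero_rpow (by positivity)]
  · have hpos : ∀ k, k ≤ n + 1 → 0 < a k := by
      intro k hk
      rcases lt_or_eq_of_le (hnonneg k) with h | h
      · exact h
      · exfalso
        have hk0 : (B ^ k) g = 0 := by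
          rw [ha k] at h; exact inner_self_eq_zero.mp h.symm
        apply hz
        obtain ⟨j, hj⟩ := Nat.exists_eq_add_of_le hk
        have hB0 : (B ^ (n + 1)) g = 0 := by
          rw [show n + 1 = j + k by omega, pow_add, Module.End.mul_apply, hk0, map_zero]
        rw [ha, hB0, inner_zero_right]
    -- main induction
    have hmain : ∀ m, m ≤ n → (a m) ^ (m + 1) ≤ (a (m + 1)) ^ m * a 0 := by
      intro m
      induction m with
      | zero => intro _; simp
      | succ m ih =>
        intro hm
        have ih' := ih (le_trans (Nat.le_succ m) hm)
        have h2 : (a (m + 1)) ^ 2 ≤ a m * a (m + 2) := by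
          have := hCS m; nlinarith
        have h3 : ((a (m + 1)) ^ 2) ^ (m + 1) ≤ (a m * a (m + 2)) ^ (m + 1) :=
          pow_le_pow_left₀ (sq_nonneg _) h2 _
        rw [← pow_mul, mul_pow] at h3
        have h4 : (a m) ^ (m + 1) * (a (m + 2)) ^ (m + 1) ≤
            ((a (m + 1)) ^ m * a 0) * (a (m + 2)) ^ (m + 1) :=
          mul_le_mul_of_nonneg_right ih' (pow_nonneg (hnonneg _) _)
        have h5 : (a (m + 1)) ^ m * (a (m + 1)) ^ (m + 2) ≤
            (a (m + 1)) ^ m * ((a (m + 2)) ^ (m + 1) * a 0) := by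
          have he : m + (m + 2) = 2 * (m + 1) := by ring
          calc (a (m + 1)) ^ m * (a (m + 1)) ^ (m + 2)
              = (a (m + 1)) ^ (2 * (m + 1)) := by rw [← pow_add, he]
            _ ≤ (a m) ^ (m + 1) * (a (m + 2)) ^ (m + 1) := h3
            _ ≤ ((a (m + 1)) ^ m * a 0) * (a (m + 2)) ^ (m + 1) := h4
            _ = (a (m + 1)) ^ m * ((a (m + 2)) ^ (m + 1) * a 0) := by ring
        have hpm : 0 < (a (m + 1)) ^ m := pow_pos (hpos (m + 1) (by omega)) _
        have := le_of_mul_le_mul_left h5 hpm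
        linarith [this]
    have hkey : (a n / a 0) ^ (n + 1) ≤ (a (n + 1) / a 0) ^ n := by
      rw [div_pow, div_pow, div_le_div_iff₀ (pow_pos hE0 _) (pow_pos hE0 _)]
      calc (a n) ^ (n + 1) * (a 0) ^ n
          ≤ ((a (n + 1)) ^ n * a 0) * (a 0) ^ n := by
            exact mul_le_mul_of_nonneg_right (hmain n le_rfl) (pow_nonneg (le_of_lt hE0) _)
        _ = (a (n + 1)) ^ n * (a 0) ^ (n + 1) := by ring
    set x : ℝ := a n / a 0 with hx_def
    set y : ℝ := a (n + 1) / a 0 with hy_def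
    have hx : (0 : ℝ) ≤ x := div_nonneg (hnonneg n) (le_of_lt hE0)
    have hy : (0 : ℝ) ≤ y := div_nonneg (hnonneg (n + 1)) (le_of_lt hE0)
    have hrp : (x ^ (n + 1) : ℝ) ^ ((1 : ℝ) / ((n : ℝ) * ((n : ℝ) + 1))) ≤
        (y ^ n : ℝ) ^ ((1 : ℝ) / ((n : ℝ) * ((n : ℝ) + 1))) :=
      Real.rpow_le_rpow (pow_nonneg hx _) hkey (by positivity)
    have hL : (x ^ (n + 1) : ℝ) ^ ((1 : ℝ) / ((n : ℝ) * ((n : ℝ) + 1))) = x ^ ((1 : ℝ) / n) := by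
      rw [← Real.rpow_natCast x (n + 1), ← Real.rpow_mul hx]
      congr 1
      push_cast
      field_simp
    have hR : (y ^ n : ℝ) ^ ((1 : ℝ) / ((n : ℝ) * ((n : ℝ) + 1))) = y ^ ((1 : ℝ) / ((n : ℝ) + 1)) := by
      rw [← Real.rpow_natCast y n, ← Real.rpow_mul hy]
      congr 1
      field_simp
    rw [hL, hR] at hrp
    exact_mod_cast hrp
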